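/- Let X be a geodesic metric space, N a Morse gauge, and let ℓ₁, ℓ₂ be N-Morse geodesics in X with ℓ₁(0) = ℓ₂(0) = e. Let x₁ = ℓ₁(v₁) and x₂ = ℓ₂(v₂) be points on ℓ₁ and ℓ₂ respectively, and let γ be any geodesic from x₁ to x₂. Then the geodesic triangle ℓ₁([0, v₁]) ∪ γ ∪ ℓ₂([0, v₂]) is 4N(3,0)-slim: each of the three sides is contained in the closed 4N(3,0)-neighbourhood of the union of the other two sides. -/

import Mathlib

/-! Let `γ u₀` be a point of `γ` nearest to `e` and `ρ` a geodesic from `e` to it. Following `ρ`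
and then `γ` towards either endpoint never brings one closer to `e` than `γ u₀`, which makes the
concatenation a `(3, 0)`-quasi-geodesic; its endpoints lie on the Morse side `ℓᵢ`, so it stays
`N(3,0)`-close to `ℓᵢ`. Matching points by their distance to `e` then puts every point of `ℓᵢ`
near `ρ` or `γ`, every point of `ρ` near both Morse sides, and every point of `γ` near one of them. -/

open Set Filter

section Defs

variable {X : Type*} [MetricSpace X]

/-- A geodesic segment of length `L`, parametrized by arc length on `[0, L]`. -/
def IsGeodesicSeg (γ : ℝ → X) (L : ℝ) : Prop :=
  0 ≤ L ∧ ∀ s ∈ Icc (0:ℝ) L, ∀ t ∈ Icc (0:ℝ) L, dist (γ s) (γ t) = |s - t|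

/-- A geodesic from `x` to `y`, parametrized by arc length on `[0, dist x y]`. -/
def IsGeodesicFromTo (γ : ℝ → X) (x y : X) : Prop :=
  IsGeodesicSeg γ (dist x y) ∧ γ 0 = x ∧ γ (dist x y) = y

/-- A geodesic ray, parametrized by arc length on `[0, ∞)`. -/
def IsGeodesicRay (ℓ : ℝ → X) : Prop :=
  ∀ s ∈ Ici (0:ℝ), ∀ t ∈ Ici (0:ℝ), dist (ℓ s) (ℓ t) = |s - t|

/-- A geodesic metric space: any two points are joined by a geodesic. -/
def GeodesicSpace (X : Type*) [MetricSpace X] : Prop :=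
  ∀ x y : X, ∃ γ : ℝ → X, IsGeodesicFromTo γ x y

/-- A `(K, C)`-quasi-geodesic defined on the interval `I ⊆ ℝ`. -/
def IsQuasiGeodesicOn (K C : ℝ) (I : Set ℝ) (σ : ℝ → X) : Prop :=
  ∀ s ∈ I, ∀ t ∈ I,
    |s - t| / K - C ≤ dist (σ s) (σ t) ∧ dist (σ s) (σ t) ≤ K * |s - t| + C

/-- A Morse gauge: a nonnegative real `N K C` for every `K ≥ 1`, `C ≥ 0`. -/
def IsMorseGauge (N : ℝ → ℝ → ℝ) : Prop :=
  ∀ K C : ℝ, 1 ≤ K → 0 ≤ C → 0 ≤ N K C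

/-- A subset `G ⊆ X` is `N`-Morse if for all `K ≥ 1`, `C ≥ 0`, every
`(K,C)`-quasi-geodesic with endpoints on `G` is contained in the closed
`N K C`-neighbourhood of `G`. -/
def IsMorseSet (N : ℝ → ℝ → ℝ) (G : Set X) : Prop :=
  ∀ K C : ℝ, 1 ≤ K → 0 ≤ C → ∀ a b : ℝ, a ≤ b → ∀ σ : ℝ → X,
    IsQuasiGeodesicOn K C (Icc a b) σ → σ a ∈ G → σ b ∈ G →
    ∀ s ∈ Icc a b, ∃ g ∈ G, dist (σ s) g ≤ N K C

/-- An `N`-Morse geodesic from `x` to `y`. -/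
def IsMorseGeodesicFromTo (N : ℝ → ℝ → ℝ) (γ : ℝ → X) (x y : X) : Prop :=
  IsGeodesicFromTo γ x y ∧ IsMorseSet N (γ '' Icc 0 (dist x y))

/-- An `N`-Morse geodesic ray. -/
def IsMorseRay (N : ℝ → ℝ → ℝ) (ℓ : ℝ → X) : Prop :=
  IsGeodesicRay ℓ ∧ IsMorseSet N (ℓ '' Ici 0)

/-- The stratum `X^(N)_e`: points joined to `e` by an `N`-Morse geodesic. -/
def morseStratum (N : ℝ → ℝ → ℝ) (e : X) : Set X :=
  {y | ∃ γ : ℝ → X, IsMorseGeodesicFromTo N γ e y}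

/-- The Gromov product `(x·y)_w`. -/
noncomputable def gprod (w x y : X) : ℝ := (dist w x + dist w y - dist x y) / 2

/-- A `B`-quasi-convex subset: geodesics with endpoints in `Y` stay in the
closed `B`-neighbourhood of `Y`. -/
def IsQuasiConvex (B : ℝ) (Y : Set X) : Prop :=
  ∀ x ∈ Y, ∀ y ∈ Y, ∀ γ : ℝ → X, IsGeodesicFromTo γ x y →
    ∀ s ∈ Icc (0:ℝ) (dist x y), ∃ g ∈ Y, dist (γ s) g ≤ B

/-- An `N`-stable subset: quasi-convex, and any two of its points are joined
by an `N`-Morse geodesic of `X`. -/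
def IsStableSubset (N : ℝ → ℝ → ℝ) (Y : Set X) : Prop :=
  (∃ B : ℝ, 0 ≤ B ∧ IsQuasiConvex B Y) ∧
    ∀ x ∈ Y, ∀ y ∈ Y, ∃ γ : ℝ → X, IsMorseGeodesicFromTo N γ x y

variable {Y : Type*} [MetricSpace Y]

/-- A `(K,C)`-quasi-isometric embedding. -/
def IsQIEmbedding (K C : ℝ) (q : X → Y) : Prop :=
  ∀ x x' : X,
    dist x x' / K - C ≤ dist (q x) (q x') ∧ dist (q x) (q x') ≤ K * dist x x' + C

/-- A `(K,C)`-quasi-isometry. -/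
def IsQuasiIsometry (K C : ℝ) (q : X → Y) : Prop :=
  IsQIEmbedding K C q ∧ ∀ y : Y, ∃ x : X, dist y (q x) ≤ C

end Defs

section Boundary

variable {X : Type*} [MetricSpace X]

/-- A sequence converges at infinity with respect to the basepoint `e`. -/
def ConvAtInf (e : X) (f : ℕ → X) : Prop :=
  Tendsto (fun p : ℕ × ℕ => gprod e (f p.1) (f p.2)) atTop atTop

/-- Two sequences converging at infinity are equivalent. -/
def EquivAtInf (e : X) (f g : ℕ → X) : Prop :=
  Tendsto (fun p : ℕ × ℕ => gprod e (f p.1) (g p.2)) atTop atTop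

/-- Sequences in `S` converging at infinity. -/
abbrev BSeq (S : Set X) (e : X) : Type _ :=
  {f : ℕ → X // (∀ n, f n ∈ S) ∧ ConvAtInf e f}

/-- The sequential boundary of `S ⊆ X` with basepoint `e`: sequences in `S`
converging at infinity, up to equivalence. -/
def SeqBoundary (S : Set X) (e : X) : Type _ :=
  Quot (fun f g : BSeq S e => EquivAtInf e f.1 g.1)

/-- The boundary point represented by a convergent sequence. -/
def SeqBoundary.mk {S : Set X} {e : X} (f : BSeq S e) : SeqBoundary S e :=
  Quot.mk _ f

/-- The liminf of Gromov products of two sequences, valued in `EReal`. -/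
noncomputable def seqGP (e : X) (f g : ℕ → X) : EReal :=
  Filter.liminf (fun p : ℕ × ℕ => ((gprod e (f p.1) (g p.2) : ℝ) : EReal)) atTop

/-- The Gromov product of two boundary points: the supremum over representing
sequences of the liminf of Gromov products. -/
noncomputable def bGP (S : Set X) (e : X) (ξ η : SeqBoundary S e) : EReal :=
  sSup {r : EReal | ∃ f g : BSeq S e,
    SeqBoundary.mk f = ξ ∧ SeqBoundary.mk g = η ∧ r = seqGP e f.1 g.1}

open Classical in
/-- `exp (−ε·r)` for an extended real `r`, with value `0` at `r = ⊤`. -/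
noncomputable def visGauge (ε : ℝ) (r : EReal) : ℝ :=
  if r = ⊤ then 0 else Real.exp (-ε * r.toReal)

/-- `d` is a visual metric on the sequential boundary of `S`:
a metric comparable to `exp(−ε·(Gromov product))` for some parameter `ε > 0`. -/
def IsVisualMetric (S : Set X) (e : X)
    (d : SeqBoundary S e → SeqBoundary S e → ℝ) : Prop :=
  (∀ ξ η, 0 ≤ d ξ η) ∧ (∀ ξ η, d ξ η = d η ξ) ∧
  (∀ ξ η ζ, d ξ ζ ≤ d ξ η + d η ζ) ∧ (∀ ξ η, d ξ η = 0 ↔ ξ = η) ∧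
  ∃ ε : ℝ, 0 < ε ∧ ∃ k₁ : ℝ, 0 < k₁ ∧ ∃ k₂ : ℝ, 0 < k₂ ∧
    ∀ ξ η, k₁ * visGauge ε (bGP S e ξ η) ≤ d ξ η ∧
      d ξ η ≤ k₂ * visGauge ε (bGP S e ξ η)

/-- `η` is (the restriction of) a self-homeomorphism of `[0,∞)`. -/
def IsHomeoIci (η : ℝ → ℝ) : Prop :=
  ContinuousOn η (Ici 0) ∧ StrictMonoOn η (Ici 0) ∧ η 0 = 0 ∧
    Tendsto η atTop atTop ∧ ∀ t ∈ Ici (0:ℝ), 0 ≤ η t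

/-- `F` is a quasi-symmetry onto its image, for the "distances" `dA`, `dB`. -/
def IsQuasiSymmetryOnto {A B : Type*} (dA : A → A → ℝ) (dB : B → B → ℝ)
    (F : A → B) : Prop :=
  Function.Injective F ∧ ∃ η : ℝ → ℝ, IsHomeoIci η ∧
    ∀ x y z : A, x ≠ y → x ≠ z → y ≠ z →
      dB (F x) (F y) / dB (F x) (F z) ≤ η (dA x y / dA x z)

end Boundary

/-- `X` (with basepoint `x`) is stably subsumed by `Y` (with basepoint `y`):
every stratum of `X` quasi-isometrically embeds in some stratum of `Y`. -/
def StablySubsumed (X Y : Type*) [MetricSpace X] [MetricSpace Y]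
    (x : X) (y : Y) : Prop :=
  ∀ N : ℝ → ℝ → ℝ, IsMorseGauge N →
    ∃ N' : ℝ → ℝ → ℝ, IsMorseGauge N' ∧
      ∃ K C : ℝ, 1 ≤ K ∧ 0 ≤ C ∧ ∃ f : X → Y,
        (∀ a ∈ morseStratum N x, f a ∈ morseStratum N' y) ∧
        ∀ a ∈ morseStratum N x, ∀ b ∈ morseStratum N x,
          dist a b / K - C ≤ dist (f a) (f b) ∧ dist (f a) (f b) ≤ K * dist a b + C

/-- Durham–Taylor stability of `f : Y → X`. -/
def DTStable {Y X : Type*} [MetricSpace Y] [MetricSpace X] (f : Y → X) : Prop :=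
  ∀ K C : ℝ, 1 ≤ K → 0 ≤ C → ∃ R : ℝ, 0 ≤ R ∧
    ∀ a₁ b₁ a₂ b₂ : ℝ, a₁ ≤ b₁ → a₂ ≤ b₂ → ∀ σ₁ σ₂ : ℝ → X,
      IsQuasiGeodesicOn K C (Icc a₁ b₁) σ₁ → IsQuasiGeodesicOn K C (Icc a₂ b₂) σ₂ →
      σ₁ a₁ = σ₂ a₂ → σ₁ b₁ = σ₂ b₂ →
      σ₁ a₁ ∈ Set.range f → σ₁ b₁ ∈ Set.range f →
      (∀ s ∈ Icc a₁ b₁, ∃ t ∈ Icc a₂ b₂, dist (σ₁ s) (σ₂ t) ≤ R) ∧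
      (∀ t ∈ Icc a₂ b₂, ∃ s ∈ Icc a₁ b₁, dist (σ₁ s) (σ₂ t) ≤ R)

theorem image_Icc_eq_union_image_sub_add {α : Type*} (γ : ℝ → α) {c u : ℝ} (hu : u ∈ Icc 0 c) :
    γ '' Icc 0 c = (fun t ↦ γ (u - t)) '' Icc 0 u ∪ (fun t ↦ γ (u + t)) '' Icc 0 (c - u) := by
  rw [← Icc_union_Icc_eq_Icc hu.1 hu.2, image_union]
  congr 1
  · rw [show (fun t ↦ γ (u - t)) = γ ∘ fun t ↦ u - t from rfl, image_comp]
    simp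
  · rw [show (fun t ↦ γ (u + t)) = γ ∘ fun t ↦ u + t from rfl, image_comp, image_const_add_Icc]
    simp

section

variable {X : Type*} [MetricSpace X]

def WithinDist (r : ℝ) (A B : Set X) : Prop :=
  ∀ p ∈ A, ∃ q ∈ B, dist p q ≤ r

namespace WithinDist

variable {r s : ℝ} {A B C D : Set X}

theorem mono (h : WithinDist r A B) (hB : B ⊆ C) (hr : r ≤ s) : WithinDist s A C :=
  fun p hp ↦ (h p hp).imp fun _ ⟨hq, hpq⟩ ↦ ⟨hB hq, hpq.trans hr⟩

theorem union_union (hA : WithinDist r A C) (hB : WithinDist r B D) :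
    WithinDist r (A ∪ B) (C ∪ D) := by
  rintro p (hp | hp)
  · obtain ⟨q, hq, hpq⟩ := hA p hp
    exact ⟨q, .inl hq, hpq⟩
  · obtain ⟨q, hq, hpq⟩ := hB p hp
    exact ⟨q, .inr hq, hpq⟩

theorem trans_union_left (h : WithinDist r A (B ∪ C)) (hB : WithinDist s B D) (hs : 0 ≤ s) :
    WithinDist (r + s) A (D ∪ C) := by
  intro p hp
  obtain ⟨q, hq | hq, hpq⟩ := h p hp
  · obtain ⟨q', hq', hqq'⟩ := hB q hq
    exact ⟨q', .inl hq', (dist_triangle p q q').trans (add_le_add hpq hqq')⟩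
  · exact ⟨q, .inr hq, by linarith⟩

end WithinDist

theorem IsMorseSet.gauge_nonneg {N : ℝ → ℝ → ℝ} {G : Set X} (hG : IsMorseSet N G)
    (hne : G.Nonempty) {K C : ℝ} (hK : 1 ≤ K) (hC : 0 ≤ C) : 0 ≤ N K C := by
  obtain ⟨g, hg⟩ := hne
  have hconst : IsQuasiGeodesicOn K C (Icc 0 0) fun _ ↦ g := by
    intro s hs t ht
    obtain rfl : s = 0 := hs.1.antisymm' hs.2
    obtain rfl : t = 0 := ht.1.antisymm' ht.2
    simp [hC]
  obtain ⟨_, -, hdist⟩ := hG K C hK hC 0 0 le_rfl _ hconst hg hg 0 ⟨le_rfl, le_rfl⟩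
  exact dist_nonneg.trans hdist

theorem isQuasiGeodesicOn_of_le {K C : ℝ} {I : Set ℝ} {σ : ℝ → X}
    (h : ∀ s ∈ I, ∀ t ∈ I, s ≤ t →
      (t - s) / K - C ≤ dist (σ s) (σ t) ∧ dist (σ s) (σ t) ≤ K * (t - s) + C) :
    IsQuasiGeodesicOn K C I σ := by
  intro s hs t ht
  rcases le_total s t with hst | hts
  · rw [abs_sub_comm, abs_of_nonneg (sub_nonneg.2 hst)]
    exact h s hs t ht hst
  · rw [abs_of_nonneg (sub_nonneg.2 hts), dist_comm]
    exact h t ht s hs hts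

theorem IsQuasiGeodesicOn.continuousOn {K : ℝ} {I : Set ℝ} {σ : ℝ → X}
    (h : IsQuasiGeodesicOn K 0 I σ) : ContinuousOn σ I := by
  refine (LipschitzOnWith.of_dist_le_mul fun s hs t ht ↦ ?_).continuousOn (K := K.toNNReal)
  calc dist (σ s) (σ t) ≤ K * |s - t| := by simpa using (h s hs t ht).2
    _ ≤ K.toNNReal * dist s t := by
      rw [Real.dist_eq]; gcongr; exact Real.le_coe_toNNReal K

namespace IsGeodesicSeg

variable {γ : ℝ → X} {L : ℝ}

theorem isQuasiGeodesicOn (h : IsGeodesicSeg γ L) : IsQuasiGeodesicOn 1 0 (Icc 0 L) γ :=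
  fun s hs t ht ↦ by simp [h.2 s hs t ht]

theorem continuousOn (h : IsGeodesicSeg γ L) : ContinuousOn γ (Icc 0 L) :=
  h.isQuasiGeodesicOn.continuousOn

theorem dist_zero (h : IsGeodesicSeg γ L) {s : ℝ} (hs : s ∈ Icc 0 L) : dist (γ 0) (γ s) = s := by
  rw [h.2 0 ⟨le_rfl, h.1⟩ s hs, zero_sub, abs_neg, abs_of_nonneg hs.1]

theorem dist_of_le (h : IsGeodesicSeg γ L) {s t : ℝ} (hs : s ∈ Icc 0 L) (ht : t ∈ Icc 0 L)
    (hst : s ≤ t) : dist (γ s) (γ t) = t - s := by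
  rw [h.2 s hs t ht, abs_sub_comm, abs_of_nonneg (sub_nonneg.2 hst)]

theorem comp_sub (h : IsGeodesicSeg γ L) {u : ℝ} (hu : u ∈ Icc 0 L) :
    IsGeodesicSeg (fun t ↦ γ (u - t)) u := by
  refine ⟨hu.1, fun s hs t ht ↦ ?_⟩
  rw [h.2 (u - s) ⟨by linarith [hs.2], by linarith [hs.1, hu.2]⟩
    (u - t) ⟨by linarith [ht.2], by linarith [ht.1, hu.2]⟩, abs_sub_comm]
  ring_nf

theorem comp_add (h : IsGeodesicSeg γ L) {u : ℝ} (hu : u ∈ Icc 0 L) :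
    IsGeodesicSeg (fun t ↦ γ (u + t)) (L - u) := by
  refine ⟨sub_nonneg.2 hu.2, fun s hs t ht ↦ ?_⟩
  rw [h.2 (u + s) ⟨by linarith [hs.1, hu.1], by linarith [hs.2]⟩
    (u + t) ⟨by linarith [ht.1, hu.1], by linarith [ht.2]⟩]
  ring_nf

theorem exists_dist_le_of_le (h : IsGeodesicSeg γ L) {v w k : ℝ} (hv : v ∈ Icc 0 L)
    (hw : w ∈ Icc 0 L) (hk : 0 ≤ k) (hwv : w ≤ v + k) :
    ∃ w' ∈ Icc 0 v, dist (γ w) (γ w') ≤ k := by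
  refine ⟨min w v, ⟨le_min hw.1 hv.1, min_le_right _ _⟩, ?_⟩
  rw [h.2 w hw _ ⟨le_min hw.1 hv.1, (min_le_right _ _).trans hv.2⟩]
  rcases le_total w v with hle | hle
  · simpa [min_eq_left hle] using hk
  · rw [min_eq_right hle, abs_of_nonneg (sub_nonneg.2 hle)]; linarith

end IsGeodesicSeg

end

section

variable {X : Type*}

noncomputable def concatAt (d : ℝ) (ρ φ : ℝ → X) (r : ℝ) : X :=
  if r ≤ d then ρ r else φ (r - d)

variable {d a : ℝ} {ρ φ : ℝ → X}

theorem concatAt_of_le {r : ℝ} (hr : r ≤ d) : concatAt d ρ φ r = ρ r := if_pos hr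

theorem concatAt_of_ge (hjoin : φ 0 = ρ d) {r : ℝ} (hr : d ≤ r) :
    concatAt d ρ φ r = φ (r - d) := by
  rcases hr.eq_or_lt with rfl | hr
  · rw [concatAt_of_le le_rfl, sub_self, hjoin]
  · exact if_neg (not_le.2 hr)

theorem concatAt_mem_union (hjoin : φ 0 = ρ d) {r : ℝ} (hr : r ∈ Icc 0 (d + a)) :
    concatAt d ρ φ r ∈ ρ '' Icc 0 d ∪ φ '' Icc 0 a := by
  rcases le_total r d with hrd | hdr
  · exact .inl ⟨r, ⟨hr.1, hrd⟩, (concatAt_of_le hrd).symm⟩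
  · exact .inr ⟨r - d, ⟨by linarith, by linarith [hr.2]⟩, (concatAt_of_ge hjoin hdr).symm⟩

variable [MetricSpace X]

theorem isQuasiGeodesicOn_concatAt (hρ : IsGeodesicSeg ρ d) (hφ : IsGeodesicSeg φ a)
    (hjoin : φ 0 = ρ d) (hfar : ∀ t ∈ Icc 0 a, d ≤ dist (ρ 0) (φ t)) :
    IsQuasiGeodesicOn 3 0 (Icc 0 (d + a)) (concatAt d ρ φ) := by
  refine isQuasiGeodesicOn_of_le fun s hs t ht hst ↦ ?_
  rw [mul_comm, add_zero, sub_zero]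
  rcases le_or_gt t d with htd | hdt
  · rw [concatAt_of_le (hst.trans htd), concatAt_of_le htd,
      hρ.dist_of_le ⟨hs.1, hst.trans htd⟩ ⟨ht.1, htd⟩ hst]
    constructor <;> linarith
  have htφ : t - d ∈ Icc 0 a := ⟨by linarith, by linarith [ht.2]⟩
  rw [concatAt_of_ge hjoin hdt.le]
  rcases le_or_gt s d with hsd | hds
  · have hsρ : s ∈ Icc 0 d := ⟨hs.1, hsd⟩
    have h₁ := hρ.dist_of_le hsρ ⟨hρ.1, le_rfl⟩ hsd
    have h₂ := hφ.dist_zero htφ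
    have h₃ := hρ.dist_zero hsρ
    have h₄ := hfar _ htφ
    rw [hjoin] at h₂
    rw [concatAt_of_le hsd]
    -- the distance is at least `d - s` (as `φ` stays `d` away from `ρ 0`) and at least
    -- `(t - d) - (d - s)`; twice the first plus the second is `t - s`
    constructor <;>
      linarith [dist_triangle (ρ s) (ρ d) (φ (t - d)), dist_triangle (ρ 0) (ρ s) (φ (t - d)),
        dist_triangle (ρ d) (ρ s) (φ (t - d)), dist_comm (ρ s) (ρ d)]
  · have hsφ : s - d ∈ Icc 0 a := ⟨by linarith, by linarith [hst, ht.2]⟩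
    rw [concatAt_of_ge hjoin hds.le, hφ.dist_of_le hsφ htφ (by linarith)]
    constructor <;> linarith

end

section

variable {X : Type*} [MetricSpace X]

/-- The triangle `e`, `p = ρ d`, `x = ℓ v`, where `p` is a point of the side `φ` nearest to `e`. -/
structure NearestPointTriangle (N : ℝ → ℝ → ℝ) (e : X) (ℓ ρ φ : ℝ → X) (L v d a : ℝ) :
    Prop where
  geodesicSeg_ℓ : IsGeodesicSeg ℓ L
  ℓ_zero : ℓ 0 = e
  morse : IsMorseSet N (ℓ '' Icc 0 L)
  v_mem : v ∈ Icc 0 L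
  geodesicSeg_ρ : IsGeodesicSeg ρ d
  ρ_zero : ρ 0 = e
  geodesicSeg_φ : IsGeodesicSeg φ a
  φ_zero : φ 0 = ρ d
  φ_end : φ a = ℓ v
  le_dist_φ : ∀ t ∈ Icc 0 a, d ≤ dist e (φ t)

namespace NearestPointTriangle

variable {N : ℝ → ℝ → ℝ} {e : X} {ℓ ρ φ : ℝ → X} {L v d a : ℝ}

theorem gauge_nonneg (T : NearestPointTriangle N e ℓ ρ φ L v d a) : 0 ≤ N 3 0 :=
  T.morse.gauge_nonneg ⟨ℓ 0, 0, ⟨le_rfl, T.geodesicSeg_ℓ.1⟩, rfl⟩ (by norm_num) le_rfl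

theorem dist_ℓ (T : NearestPointTriangle N e ℓ ρ φ L v d a) {w : ℝ} (hw : w ∈ Icc 0 L) :
    dist e (ℓ w) = w := by
  rw [← T.ℓ_zero, T.geodesicSeg_ℓ.dist_zero hw]

theorem abs_sub_dist_le (T : NearestPointTriangle N e ℓ ρ φ L v d a) {w k : ℝ}
    (hw : w ∈ Icc 0 L) {p : X} (hp : dist p (ℓ w) ≤ k) : |w - dist e p| ≤ k := by
  rw [← T.dist_ℓ hw, dist_comm e, dist_comm e]
  exact (abs_dist_sub_le _ _ _).trans (dist_comm p (ℓ w) ▸ hp)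

theorem d_le_v (T : NearestPointTriangle N e ℓ ρ φ L v d a) : d ≤ v := by
  simpa [T.φ_end, T.dist_ℓ T.v_mem] using T.le_dist_φ a ⟨T.geodesicSeg_φ.1, le_rfl⟩

theorem isQuasiGeodesicOn (T : NearestPointTriangle N e ℓ ρ φ L v d a) :
    IsQuasiGeodesicOn 3 0 (Icc 0 (d + a)) (concatAt d ρ φ) :=
  isQuasiGeodesicOn_concatAt T.geodesicSeg_ρ T.geodesicSeg_φ T.φ_zero
    (T.ρ_zero ▸ T.le_dist_φ)

theorem concatAt_zero (T : NearestPointTriangle N e ℓ ρ φ L v d a) : concatAt d ρ φ 0 = e := by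
  rw [concatAt_of_le T.geodesicSeg_ρ.1, T.ρ_zero]

theorem concatAt_end (T : NearestPointTriangle N e ℓ ρ φ L v d a) :
    concatAt d ρ φ (d + a) = ℓ v := by
  rw [concatAt_of_ge T.φ_zero (by linarith [T.geodesicSeg_φ.1]), add_sub_cancel_left, T.φ_end]

theorem exists_dist_concatAt_le (T : NearestPointTriangle N e ℓ ρ φ L v d a) {r : ℝ}
    (hr : r ∈ Icc 0 (d + a)) : ∃ w ∈ Icc 0 L, dist (concatAt d ρ φ r) (ℓ w) ≤ N 3 0 := by
  obtain ⟨_, ⟨w, hw, rfl⟩, hdist⟩ := T.morse 3 0 (by norm_num) le_rfl 0 (d + a)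
    (by linarith [T.geodesicSeg_ρ.1, T.geodesicSeg_φ.1]) _ T.isQuasiGeodesicOn
    (T.concatAt_zero ▸ ⟨0, ⟨le_rfl, T.geodesicSeg_ℓ.1⟩, T.ℓ_zero⟩)
    (T.concatAt_end ▸ ⟨v, T.v_mem, rfl⟩) r hr
  exact ⟨w, hw, hdist⟩

theorem exists_dist_ρ_le (T : NearestPointTriangle N e ℓ ρ φ L v d a) {τ : ℝ}
    (hτ : τ ∈ Icc 0 d) : ∃ w ∈ Icc 0 L, dist (ρ τ) (ℓ w) ≤ N 3 0 := by
  simpa only [concatAt_of_le hτ.2] using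
    T.exists_dist_concatAt_le ⟨hτ.1, by linarith [hτ.2, T.geodesicSeg_φ.1]⟩

theorem exists_dist_φ_le (T : NearestPointTriangle N e ℓ ρ φ L v d a) {t : ℝ}
    (ht : t ∈ Icc 0 a) : ∃ w ∈ Icc 0 L, dist (φ t) (ℓ w) ≤ N 3 0 := by
  simpa only [concatAt_of_ge T.φ_zero (le_add_of_nonneg_right ht.1), add_sub_cancel_left] using
    T.exists_dist_concatAt_le (r := d + t) ⟨by linarith [ht.1, T.geodesicSeg_ρ.1], by linarith [ht.2]⟩

theorem withinDist_ρ (T : NearestPointTriangle N e ℓ ρ φ L v d a) :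
    WithinDist (2 * N 3 0) (ρ '' Icc 0 d) (ℓ '' Icc 0 v) := by
  rintro _ ⟨τ, hτ, rfl⟩
  obtain ⟨w, hw, hτw⟩ := T.exists_dist_ρ_le hτ
  have hdist : dist e (ρ τ) = τ := by rw [← T.ρ_zero, T.geodesicSeg_ρ.dist_zero hτ]
  have hwτ := T.abs_sub_dist_le hw hτw
  rw [hdist] at hwτ
  obtain ⟨w', hw', hww'⟩ := T.geodesicSeg_ℓ.exists_dist_le_of_le T.v_mem hw T.gauge_nonneg
    (by linarith [(abs_le.1 hwτ).2, hτ.2, T.d_le_v])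
  exact ⟨ℓ w', ⟨w', hw', rfl⟩, by linarith [dist_triangle (ρ τ) (ℓ w) (ℓ w')]⟩

theorem withinDist_ℓ (T : NearestPointTriangle N e ℓ ρ φ L v d a) :
    WithinDist (2 * N 3 0) (ℓ '' Icc 0 v) (ρ '' Icc 0 d ∪ φ '' Icc 0 a) := by
  rintro _ ⟨s, hs, rfl⟩
  have hcont : ContinuousOn (fun r ↦ dist e (concatAt d ρ φ r)) (Icc 0 (d + a)) :=
    continuous_const.dist continuous_id |>.comp_continuousOn T.isQuasiGeodesicOn.continuousOn
  obtain ⟨τ, hτ, hτs : dist e (concatAt d ρ φ τ) = s⟩ := intermediate_value_Icc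
    (by linarith [T.geodesicSeg_ρ.1, T.geodesicSeg_φ.1]) hcont
    (by simpa [T.concatAt_zero, T.concatAt_end, T.dist_ℓ T.v_mem] using hs)
  obtain ⟨w, hw, hτw⟩ := T.exists_dist_concatAt_le hτ
  have hws := T.abs_sub_dist_le hw hτw
  rw [hτs] at hws
  have hsw : dist (ℓ s) (ℓ w) ≤ N 3 0 := by
    rw [T.geodesicSeg_ℓ.2 s ⟨hs.1, hs.2.trans T.v_mem.2⟩ w hw, abs_sub_comm]
    exact hws
  refine ⟨_, concatAt_mem_union T.φ_zero hτ, ?_⟩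
  linarith [dist_triangle (ℓ s) (ℓ w) (concatAt d ρ φ τ), dist_comm (concatAt d ρ φ τ) (ℓ w)]

/-- Before reaching `φ t`, the side `φ` crosses the sphere of radius `v + 2 N(3,0)` about `e`,
at a point near `ℓ` and hence within `4 N(3,0)` of `x = φ a`. -/
theorem sub_le_of_lt_dist (T : NearestPointTriangle N e ℓ ρ φ L v d a) {t : ℝ}
    (ht : t ∈ Icc 0 a) (hfar : v + 2 * N 3 0 < dist e (φ t)) : a - t ≤ 4 * N 3 0 := by
  have hsub : Icc 0 t ⊆ Icc 0 a := Icc_subset_Icc_right ht.2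
  have hcont : ContinuousOn (fun u ↦ dist e (φ u)) (Icc 0 t) :=
    (continuous_const.dist continuous_id).comp_continuousOn (T.geodesicSeg_φ.continuousOn.mono hsub)
  have hnear : dist e (φ 0) ≤ v := by
    rw [T.φ_zero, ← T.ρ_zero, T.geodesicSeg_ρ.dist_zero ⟨T.geodesicSeg_ρ.1, le_rfl⟩]
    exact T.d_le_v
  obtain ⟨u, hu, hue : dist e (φ u) = v + 2 * N 3 0⟩ := intermediate_value_Icc ht.1 hcont
    ⟨by linarith [T.gauge_nonneg], hfar.le⟩
  obtain ⟨w, hw, huw⟩ := T.exists_dist_φ_le (hsub hu)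
  have hwu := T.abs_sub_dist_le hw huw
  rw [hue] at hwu
  have hwv : dist (ℓ w) (ℓ v) = w - v := by
    rw [T.geodesicSeg_ℓ.2 w hw v T.v_mem, abs_of_nonneg (by linarith [(abs_le.1 hwu).1,
      T.gauge_nonneg])]
  have hua : dist (φ u) (ℓ v) = a - u := by
    rw [← T.φ_end, T.geodesicSeg_φ.dist_of_le (hsub hu) ⟨T.geodesicSeg_φ.1, le_rfl⟩ (hsub hu).2]
  linarith [dist_triangle (φ u) (ℓ w) (ℓ v), (abs_le.1 hwu).2, hu.2]

theorem withinDist_φ (T : NearestPointTriangle N e ℓ ρ φ L v d a) :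
    WithinDist (4 * N 3 0) (φ '' Icc 0 a) (ℓ '' Icc 0 v) := by
  rintro _ ⟨t, ht, rfl⟩
  obtain ⟨w, hw, htw⟩ := T.exists_dist_φ_le ht
  by_cases hwv : w ≤ v + 3 * N 3 0
  · obtain ⟨w', hw', hww'⟩ := T.geodesicSeg_ℓ.exists_dist_le_of_le T.v_mem hw
      (by linarith [T.gauge_nonneg]) hwv
    exact ⟨ℓ w', ⟨w', hw', rfl⟩, by linarith [dist_triangle (φ t) (ℓ w) (ℓ w')]⟩
  · have hfar : v + 2 * N 3 0 < dist e (φ t) := by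
      linarith [(abs_le.1 (T.abs_sub_dist_le hw htw)).2]
    refine ⟨ℓ v, ⟨v, ⟨T.v_mem.1, le_rfl⟩, rfl⟩, ?_⟩
    rw [← T.φ_end, T.geodesicSeg_φ.dist_of_le ht ⟨T.geodesicSeg_φ.1, le_rfl⟩ ht.2]
    exact T.sub_le_of_lt_dist ht hfar

end NearestPointTriangle

end

theorem statement15_general {X : Type*} [MetricSpace X] (hX : GeodesicSpace X) (e : X)
    (N : ℝ → ℝ → ℝ)
    (ℓ₁ ℓ₂ : ℝ → X) (L₁ L₂ : ℝ)
    (hg₁ : IsGeodesicSeg ℓ₁ L₁) (hg₂ : IsGeodesicSeg ℓ₂ L₂)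
    (hm₁ : IsMorseSet N (ℓ₁ '' Icc 0 L₁)) (hm₂ : IsMorseSet N (ℓ₂ '' Icc 0 L₂))
    (he₁ : ℓ₁ 0 = e) (he₂ : ℓ₂ 0 = e)
    (v₁ v₂ : ℝ) (hv₁ : v₁ ∈ Icc (0:ℝ) L₁) (hv₂ : v₂ ∈ Icc (0:ℝ) L₂)
    (γ : ℝ → X) (hγ : IsGeodesicFromTo γ (ℓ₁ v₁) (ℓ₂ v₂)) :
    (∀ p ∈ ℓ₁ '' Icc 0 v₁,
      ∃ q ∈ (ℓ₂ '' Icc 0 v₂) ∪ (γ '' Icc 0 (dist (ℓ₁ v₁) (ℓ₂ v₂))),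
        dist p q ≤ 4 * N 3 0) ∧
    (∀ p ∈ ℓ₂ '' Icc 0 v₂,
      ∃ q ∈ (ℓ₁ '' Icc 0 v₁) ∪ (γ '' Icc 0 (dist (ℓ₁ v₁) (ℓ₂ v₂))),
        dist p q ≤ 4 * N 3 0) ∧
    (∀ p ∈ γ '' Icc 0 (dist (ℓ₁ v₁) (ℓ₂ v₂)),
      ∃ q ∈ (ℓ₁ '' Icc 0 v₁) ∪ (ℓ₂ '' Icc 0 v₂),
        dist p q ≤ 4 * N 3 0) := by
  obtain ⟨hγ, hγ0, hγc⟩ := hγ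
  set c := dist (ℓ₁ v₁) (ℓ₂ v₂)
  obtain ⟨u₀, hu₀, hmin⟩ := isCompact_Icc.exists_isMinOn (nonempty_Icc.2 hγ.1)
    ((continuous_const (y := e).dist continuous_id).comp_continuousOn hγ.continuousOn)
  obtain ⟨ρ, hρ, hρ0, hρd⟩ := hX e (γ u₀)
  have T₁ : NearestPointTriangle N e ℓ₁ ρ (fun t ↦ γ (u₀ - t)) L₁ v₁ (dist e (γ u₀)) u₀ :=
    ⟨hg₁, he₁, hm₁, hv₁, hρ, hρ0, hγ.comp_sub hu₀, by simp [hρd], by simp [hγ0],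
      fun t ht ↦ isMinOn_iff.1 hmin _ ⟨by linarith [ht.2], by linarith [ht.1, hu₀.2]⟩⟩
  have T₂ : NearestPointTriangle N e ℓ₂ ρ (fun t ↦ γ (u₀ + t)) L₂ v₂ (dist e (γ u₀)) (c - u₀) :=
    ⟨hg₂, he₂, hm₂, hv₂, hρ, hρ0, hγ.comp_add hu₀, by simp [hρd], by simp [hγc],
      fun t ht ↦ isMinOn_iff.1 hmin _ ⟨by linarith [ht.1, hu₀.1], by linarith [ht.2]⟩⟩
  have hN : 0 ≤ 2 * N 3 0 := by linarith [T₁.gauge_nonneg]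
  have hγ_split := image_Icc_eq_union_image_sub_add γ hu₀
  refine ⟨?_, ?_, hγ_split ▸ T₁.withinDist_φ.union_union T₂.withinDist_φ⟩
  · exact (T₁.withinDist_ℓ.trans_union_left T₂.withinDist_ρ hN).mono
      (union_subset_union_right _ (hγ_split ▸ subset_union_left)) (by linarith)
  · exact (T₂.withinDist_ℓ.trans_union_left T₁.withinDist_ρ hN).mono
      (union_subset_union_right _ (hγ_split ▸ subset_union_right)) (by linarith)

/-- triangles with two `N`-Morse sides issuing from `e` are
`4N(3,0)`-slim. -/
theorem statement15 {X : Type*} [MetricSpace X] (hX : GeodesicSpace X) (e : X)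
    (N : ℝ → ℝ → ℝ) (hN : IsMorseGauge N)
    (ℓ₁ ℓ₂ : ℝ → X) (L₁ L₂ : ℝ)
    (hg₁ : IsGeodesicSeg ℓ₁ L₁) (hg₂ : IsGeodesicSeg ℓ₂ L₂)
    (hm₁ : IsMorseSet N (ℓ₁ '' Icc 0 L₁)) (hm₂ : IsMorseSet N (ℓ₂ '' Icc 0 L₂))
    (he₁ : ℓ₁ 0 = e) (he₂ : ℓ₂ 0 = e)
    (v₁ v₂ : ℝ) (hv₁ : v₁ ∈ Icc (0:ℝ) L₁) (hv₂ : v₂ ∈ Icc (0:ℝ) L₂)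
    (γ : ℝ → X) (hγ : IsGeodesicFromTo γ (ℓ₁ v₁) (ℓ₂ v₂)) :
    (∀ p ∈ ℓ₁ '' Icc 0 v₁,
      ∃ q ∈ (ℓ₂ '' Icc 0 v₂) ∪ (γ '' Icc 0 (dist (ℓ₁ v₁) (ℓ₂ v₂))),
        dist p q ≤ 4 * N 3 0) ∧
    (∀ p ∈ ℓ₂ '' Icc 0 v₂,
      ∃ q ∈ (ℓ₁ '' Icc 0 v₁) ∪ (γ '' Icc 0 (dist (ℓ₁ v₁) (ℓ₂ v₂))),
        dist p q ≤ 4 * N 3 0) ∧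
    (∀ p ∈ γ '' Icc 0 (dist (ℓ₁ v₁) (ℓ₂ v₂)),
      ∃ q ∈ (ℓ₁ '' Icc 0 v₁) ∪ (ℓ₂ '' Icc 0 v₂),
        dist p q ≤ 4 * N 3 0) :=
  statement15_general hX e N ℓ₁ ℓ₂ L₁ L₂ hg₁ hg₂ hm₁ hm₂ he₁ he₂ v₁ v₂ hv₁ hv₂ γ hγ
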